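/- The dual action of G on the character group of N satisfies: for g = (n,k,l̄) ∈ G and the character χ_{ω₁,ω₂,j}, the character χ ∘ (conjugation by g⁻¹) equals χ_{ω₁, ω₂', j} where ω₂' = ω₂ + jn/L − ⌊ω₂ + jn/L⌋. In particular the first coordinate ω₁ and the index j are invariant under the dual action. -/

import Mathlib

/-!
Conjugation by `g = (n,k,l̄)` sends `(a,b,c̄)` to `(a, b, c̄ + bn − ka)`, and `ka ≡ 0 mod L` on `N`.
Since `c̄ ↦ e^{2πi j c/L}` is an additive character of `ℤ/Lℤ`, the extra `bn` multiplies `χ` by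
`e^{2πi (jn/L) b}`, i.e. it shifts `ω₂` by `jn/L`; and `χ` depends on `ω₂` only modulo `1`
because `b` is an integer.
-/

def gmul (L : ℕ) (a b : ℤ × ℤ × ZMod L) : ℤ × ℤ × ZMod L :=
  (a.1 + b.1, a.2.1 + b.2.1, a.2.2 + b.2.2 + ((b.2.1 * a.1 : ℤ) : ZMod L))

def ginv (L : ℕ) (a : ℤ × ℤ × ZMod L) : ℤ × ℤ × ZMod L :=
  (-a.1, -a.2.1, -a.2.2 + ((a.2.1 * a.1 : ℤ) : ZMod L))

/-- The character `χ_{ω₁,ω₂,j}` of `N = {(nL,k,l̄)} ⊆ G`, written at the element level: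
`χ_{ω₁,ω₂,j}(nL,k,l̄) = e^{2πi(ω₁n + ω₂k + jl/L)}` (for `x ∈ N` the first coordinate
`x.1` is a multiple of `L`, and `n = x.1/L`). -/
noncomputable def chiE (L : ℕ) (ω₁ ω₂ : ℝ) (j : ℕ) (x : ℤ × ℤ × ZMod L) : ℂ :=
  Complex.exp (2 * Real.pi * Complex.I *
    ((ω₁ : ℂ) * ((x.1 / L : ℤ) : ℂ) + (ω₂ : ℂ) * x.2.1 + (j : ℂ) * (x.2.2.val : ℤ) / L))

open Complex

theorem gmul_gmul_ginv (L : ℕ) (g x : ℤ × ℤ × ZMod L) :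
    gmul L (gmul L g x) (ginv L g) =
      (x.1, x.2.1, x.2.2 + ((x.2.1 * g.1 : ℤ) : ZMod L) - (g.2.1 : ZMod L) * (x.1 : ZMod L)) := by
  simp only [gmul, ginv]
  refine Prod.ext (by ring) (Prod.ext (by ring) ?_)
  push_cast
  ring

theorem chiE_add_intCast (L : ℕ) (ω₁ ω₂ : ℝ) (m : ℤ) (j : ℕ) (x : ℤ × ℤ × ZMod L) :
    chiE L ω₁ (ω₂ + m) j x = chiE L ω₁ ω₂ j x := by
  rw [chiE, chiE, exp_eq_exp_iff_exists_int]
  exact ⟨m * x.2.1, by push_cast; ring⟩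

theorem chiE_fract (L : ℕ) (ω₁ ω₂ : ℝ) (j : ℕ) (x : ℤ × ℤ × ZMod L) :
    chiE L ω₁ (Int.fract ω₂) j x = chiE L ω₁ ω₂ j x := by
  rw [← chiE_add_intCast L ω₁ (Int.fract ω₂) ⌊ω₂⌋, Int.fract_add_floor]

theorem chiE_eq_exp_mul_toCircle_pow (L : ℕ) [NeZero L] (ω₁ ω₂ : ℝ) (j : ℕ)
    (x : ℤ × ℤ × ZMod L) :
    chiE L ω₁ ω₂ j x =
      exp (2 * Real.pi * I * ((ω₁ : ℂ) * ((x.1 / L : ℤ) : ℂ) + (ω₂ : ℂ) * x.2.1)) *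
        (ZMod.toCircle x.2.2 : ℂ) ^ j := by
  rw [chiE, ZMod.toCircle_apply, ← exp_nat_mul, ← exp_add]
  push_cast
  ring_nf

theorem chiE_add_mul_intCast (L : ℕ) (ω₁ ω₂ : ℝ) (j : ℕ) (a k n : ℤ) (l : ZMod L) :
    chiE L ω₁ ω₂ j (a, k, l + ((k * n : ℤ) : ZMod L)) =
      chiE L ω₁ (ω₂ + j * n / L) j (a, k, l) := by
  obtain rfl | hL := eq_or_ne L 0
  · simp [chiE] -- both divisions by `L = 0` are `0`
  have : NeZero L := ⟨hL⟩
  rw [chiE_eq_exp_mul_toCircle_pow, chiE_eq_exp_mul_toCircle_pow, AddChar.map_add_eq_mul,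
    Circle.coe_mul, ZMod.toCircle_intCast]
  push_cast
  rw [mul_pow, ← exp_nat_mul, mul_left_comm, ← exp_add, mul_comm]
  congr 2
  ring

theorem dual_action_general (L : ℕ) (ω₁ ω₂ : ℝ) (j : ℕ)
    (g : ℤ × ℤ × ZMod L) :
    ∀ x : ℤ × ℤ × ZMod L, (L : ℤ) ∣ x.1 →
      chiE L ω₁ ω₂ j (gmul L (gmul L g x) (ginv L g))
        = chiE L ω₁ (Int.fract (ω₂ + (j : ℝ) * (g.1 : ℝ) / L)) j x := by
  intro x hx
  rw [gmul_gmul_ginv, (ZMod.intCast_zmod_eq_zero_iff_dvd x.1 L).2 hx, mul_zero, sub_zero,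
    chiE_fract, chiE_add_mul_intCast]

/-- the dual action of `g = (n,k,l̄) ∈ G` on the character `χ_{ω₁,ω₂,j}` of
`N` gives the character `χ_{ω₁,ω₂',j}` with `ω₂' = ω₂ + jn/L − ⌊ω₂ + jn/L⌋`; in particular
`ω₁` and `j` are invariant. -/
theorem dual_action (L : ℕ) (hL : 1 ≤ L) (ω₁ ω₂ : ℝ) (j : ℕ) (hj : j < L)
    (hω₁ : ω₁ ∈ Set.Ico (0:ℝ) 1) (hω₂ : ω₂ ∈ Set.Ico (0:ℝ) 1)
    (g : ℤ × ℤ × ZMod L) :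
    ∀ x : ℤ × ℤ × ZMod L, (L : ℤ) ∣ x.1 →
      chiE L ω₁ ω₂ j (gmul L (gmul L g x) (ginv L g))
        = chiE L ω₁ (Int.fract (ω₂ + (j : ℝ) * (g.1 : ℝ) / L)) j x :=
  dual_action_general L ω₁ ω₂ j g
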